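/- arXiv:1702.06860 — 2 statements merged into one kernel-verified Lean document; each statement's English description precedes it below -/
import Mathlib

section
/- Let C be the cone x²/a² + y²/b² − z²/c² = 0 with a > b > 0, c > 0, and let F = (1/√(a²+c²))·(√(a²−b²), 0, √(b²+c²)) ∈ 𝕊² be a focus, i.e. F lies on a cocyclic line of C. Then two planes through the line ℝF are orthogonal (with respect to the Euclidean inner product on their normal vectors) if and only if their normal vectors are conjugate with respect to the dual form S°(v) = a²x² + b²y² − c²z². -/
open Matrix

/-- Let `F` be a focus (unit vector on a cocyclic line) of the cone
`x²/a² + y²/b² − z²/c² = 0`. Two planes through the line `ℝF`, identified with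
their normal vectors `n₁, n₂ ⊥ F`, are Euclidean-orthogonal iff their normals
are conjugate with respect to the dual form `S°(v) = a²x² + b²y² − c²z²`. -/
theorem stmt6 (a b c : ℝ) (hb : 0 < b) (hab : b < a) (hc : 0 < c)
    (F : Fin 3 → ℝ)
    (hF : F = (Real.sqrt (a^2 + c^2))⁻¹ •
      ![Real.sqrt (a^2 - b^2), 0, Real.sqrt (b^2 + c^2)])
    (n₁ n₂ : Fin 3 → ℝ)
    (h₁ : n₁ ⬝ᵥ F = 0) (h₂ : n₂ ⬝ᵥ F = 0) :
    n₁ ⬝ᵥ n₂ = 0 ↔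
      a^2 * (n₁ 0 * n₂ 0) + b^2 * (n₁ 1 * n₂ 1) - c^2 * (n₁ 2 * n₂ 2) = 0 := by
  set p := Real.sqrt (a^2 - b^2) with hp
  set q := Real.sqrt (b^2 + c^2) with hq
  have ha : 0 < a := hb.trans hab
  have hp2 : p^2 = a^2 - b^2 := Real.sq_sqrt (by nlinarith)
  have hq2 : q^2 = b^2 + c^2 := Real.sq_sqrt (by nlinarith)
  have hs : 0 < Real.sqrt (a^2 + c^2) := Real.sqrt_pos.mpr (by nlinarith)
  have hs' : (Real.sqrt (a^2 + c^2))⁻¹ ≠ 0 := inv_ne_zero hs.ne'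
  have e₁ : p * n₁ 0 + q * n₁ 2 = 0 := by
    have h := h₁
    rw [hF] at h
    simp only [dotProduct, Fin.sum_univ_three, Pi.smul_apply, Matrix.cons_val_zero,
      Matrix.cons_val_one, Matrix.head_cons, Matrix.cons_val_two, Matrix.tail_cons,
      smul_eq_mul] at h
    have h' : (Real.sqrt (a^2 + c^2))⁻¹ * (p * n₁ 0 + q * n₁ 2)
        = (Real.sqrt (a^2 + c^2))⁻¹ * 0 := by rw [mul_zero]; linear_combination h
    exact mul_left_cancel₀ hs' h'
  have e₂ : p * n₂ 0 + q * n₂ 2 = 0 := by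
    have h := h₂
    rw [hF] at h
    simp only [dotProduct, Fin.sum_univ_three, Pi.smul_apply, Matrix.cons_val_zero,
      Matrix.cons_val_one, Matrix.head_cons, Matrix.cons_val_two, Matrix.tail_cons,
      smul_eq_mul] at h
    have h' : (Real.sqrt (a^2 + c^2))⁻¹ * (p * n₂ 0 + q * n₂ 2)
        = (Real.sqrt (a^2 + c^2))⁻¹ * 0 := by rw [mul_zero]; linear_combination h
    exact mul_left_cancel₀ hs' h'
  have key : p^2 * (n₁ 0 * n₂ 0) = q^2 * (n₁ 2 * n₂ 2) := by
    have h1 : p * n₁ 0 = -(q * n₁ 2) := by linarith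
    have h2 : p * n₂ 0 = -(q * n₂ 2) := by linarith
    have := congrArg₂ (· * ·) h1 h2
    ring_nf
    ring_nf at this
    linarith
  have main : b^2 * (n₁ ⬝ᵥ n₂) =
      a^2 * (n₁ 0 * n₂ 0) + b^2 * (n₁ 1 * n₂ 1) - c^2 * (n₁ 2 * n₂ 2) := by
    simp only [dotProduct, Fin.sum_univ_three]
    linear_combination -key + (n₁ 0 * n₂ 0) * hp2 - (n₁ 2 * n₂ 2) * hq2
  constructor
  · intro h
    rw [← main, h, mul_zero]
  · intro h
    have : b^2 * (n₁ ⬝ᵥ n₂) = 0 := by rw [main, h]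
    have hb2 : b^2 ≠ 0 := by positivity
    exact (mul_eq_zero.mp this).resolve_left hb2
end

section
/- Semi-hyperbola as equidistant locus: in the Beltrami–Cayley–Klein model (unit disk in the plane z = 1, absolute x² + y² = 1), fix 0 < c < 1, let F = (c, 0) and d the line {x = −c}. Then a point p = (x,y) in the open unit disk satisfies dist_ℍ(p, F) = dist_ℍ(p, d) if and only if x = ((1−c²)/(4c))·y². -/
/-- Inverse hyperbolic cosine. -/
noncomputable def arcoshReal (t : ℝ) : ℝ := Real.log (t + Real.sqrt (t^2 - 1))

/-- Hyperbolic distance between points of the open unit disk in the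
Beltrami–Cayley–Klein model:
`cosh dist(p,q) = (1 − p·q)/√((1−|p|²)(1−|q|²))`. -/
noncomputable def kleinDist (p q : ℝ × ℝ) : ℝ :=
  arcoshReal ((1 - p.1 * q.1 - p.2 * q.2) /
    Real.sqrt ((1 - p.1^2 - p.2^2) * (1 - q.1^2 - q.2^2)))

lemma arcosh_lt {s t : ℝ} (hs : 1 ≤ s) (hst : s < t) : arcoshReal s < arcoshReal t := by
  unfold arcoshReal
  have h1 : (0:ℝ) < s + Real.sqrt (s^2-1) := by
    have := Real.sqrt_nonneg (s^2-1); linarith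
  apply Real.log_lt_log h1
  have := Real.sqrt_le_sqrt (show s^2 - 1 ≤ t^2 - 1 by nlinarith)
  linarith

lemma arcosh_mono {s t : ℝ} (hs : 1 ≤ s) (hst : s ≤ t) : arcoshReal s ≤ arcoshReal t := by
  rcases eq_or_lt_of_le hst with rfl | h
  · exact le_refl _
  · exact (arcosh_lt hs h).le

lemma arcosh_inj {s t : ℝ} (hs : 1 ≤ s) (ht : 1 ≤ t)
    (h : arcoshReal s = arcoshReal t) : s = t := by
  by_contra hne
  rcases lt_or_gt_of_ne hne with h' | h'
  · exact absurd h (ne_of_lt (arcosh_lt hs h'))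
  · exact absurd h (ne_of_gt (arcosh_lt ht h'))

set_option maxHeartbeats 1000000 in
/-- Semi-hyperbola as equidistant locus in the Klein model: for `0 < c < 1`,
`F = (c,0)` and the line `d = {x = −c}`, a point `p` of the open unit disk is at
equal hyperbolic distance from `F` and from `d` iff
`p.1 = ((1−c²)/(4c))·p.2²`. -/
theorem stmt19 (c : ℝ) (hc : 0 < c) (hc1 : c < 1)
    (p : ℝ × ℝ) (hp : p.1^2 + p.2^2 < 1) :
    kleinDist p (c, 0)
        = sInf {r : ℝ | ∃ q : ℝ × ℝ, q.1 = -c ∧ q.1^2 + q.2^2 < 1 ∧ r = kleinDist p q}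
      ↔ p.1 = ((1 - c^2) / (4 * c)) * p.2^2 := by
  obtain ⟨x, y⟩ := p
  simp only at hp ⊢
  have hb : 0 < 1 - c^2 := by nlinarith
  have hD : 0 < 1 - x^2 - y^2 := by nlinarith
  have hx2 : x^2 < 1 := by nlinarith [sq_nonneg y]
  have hxc2 : x^2*c^2 < 1 := by nlinarith [sq_nonneg x, sq_nonneg c]
  have ha : 0 < 1 + x*c := by nlinarith [sq_nonneg (1 + x*c)]
  have ha' : 0 < 1 - x*c := by nlinarith [sq_nonneg (1 - x*c)]
  set K : ℝ := (1 + x*c)^2 - (1 - c^2)*y^2 with hKdef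
  have hKpos : 0 < K := by nlinarith [sq_nonneg (x+c), mul_pos hb hD]
  set g2 : ℝ := Real.sqrt (K / ((1-x^2-y^2)*(1-c^2))) with hg2def
  have hg2sq : g2^2 = K/((1-x^2-y^2)*(1-c^2)) :=
    Real.sq_sqrt (by positivity)
  have hg2nn : 0 ≤ g2 := Real.sqrt_nonneg _
  have hg2_ge1 : 1 ≤ g2 := by
    rw [hg2def, Real.one_le_sqrt, le_div_iff₀ (by positivity)]
    nlinarith [sq_nonneg (x+c)]
  -- positivity of numerators
  have hN : ∀ t : ℝ, t^2 < 1-c^2 → 0 < 1 + x*c - y*t := by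
    intro t ht
    nlinarith [sq_nonneg (x+c), sq_nonneg (y-t)]
  -- general lower bound on the cosh-argument along the line
  have hbound : ∀ t : ℝ, t^2 < 1-c^2 →
      g2 ≤ (1 + x*c - y*t)/Real.sqrt ((1-x^2-y^2)*(1-c^2-t^2)) := by
    intro t ht
    have hden : 0 < (1-x^2-y^2)*(1-c^2-t^2) := by
      apply mul_pos hD; linarith
    have hNt := hN t ht
    have hFnn : 0 ≤ (1 + x*c - y*t)/Real.sqrt ((1-x^2-y^2)*(1-c^2-t^2)) :=
      div_nonneg hNt.le (Real.sqrt_nonneg _)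
    have hFsq : ((1 + x*c - y*t)/Real.sqrt ((1-x^2-y^2)*(1-c^2-t^2)))^2
        = (1+x*c-y*t)^2 / ((1-x^2-y^2)*(1-c^2-t^2)) := by
      rw [div_pow, Real.sq_sqrt hden.le]
    have hsq : g2^2 ≤ ((1 + x*c - y*t)/Real.sqrt ((1-x^2-y^2)*(1-c^2-t^2)))^2 := by
      rw [hg2sq, hFsq, div_le_div_iff₀ (by positivity) hden]
      nlinarith [mul_nonneg hD.le (sq_nonneg ((1+x*c)*t - (1-c^2)*y))]
    calc g2 = Real.sqrt (g2^2) := (Real.sqrt_sq hg2nn).symm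
      _ ≤ Real.sqrt (((1 + x*c - y*t)/Real.sqrt ((1-x^2-y^2)*(1-c^2-t^2)))^2) :=
          Real.sqrt_le_sqrt hsq
      _ = _ := Real.sqrt_sq hFnn
  -- the minimizing point on the line
  have htstar : (y*(1-c^2)/(1+x*c))^2 < 1 - c^2 := by
    rw [div_pow, div_lt_iff₀ (by positivity)]
    nlinarith [mul_pos hb hKpos]
  have hdisk : (-c)^2 + (y*(1-c^2)/(1+x*c))^2 < 1 := by nlinarith
  -- value of kleinDist at the minimizing point equals arcoshReal g2
  have hval : kleinDist (x, y) (-c, y*(1-c^2)/(1+x*c)) = arcoshReal g2 := by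
    unfold kleinDist
    congr 1
    have hnum : 1 - x * (-c) - y * (y*(1-c^2)/(1+x*c)) = K/(1+x*c) := by
      field_simp [hKdef]; ring
    have hden : (1 - x^2 - y^2) * (1 - (-c)^2 - (y*(1-c^2)/(1+x*c))^2)
        = (1-x^2-y^2)*(1-c^2)*K/(1+x*c)^2 := by
      field_simp [hKdef]; ring
    rw [hnum, hden]
    have harg : (0:ℝ) ≤ K/(1+x*c) / Real.sqrt ((1-x^2-y^2)*(1-c^2)*K/(1+x*c)^2) :=
      div_nonneg (by positivity) (Real.sqrt_nonneg _)
    have hsqrtpos : 0 < Real.sqrt ((1-x^2-y^2)*(1-c^2)*K/(1+x*c)^2) :=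
      Real.sqrt_pos.mpr (by positivity)
    have hsq : (K/(1+x*c) / Real.sqrt ((1-x^2-y^2)*(1-c^2)*K/(1+x*c)^2))^2
        = K / ((1-x^2-y^2)*(1-c^2)) := by
      rw [div_pow, Real.sq_sqrt (by positivity)]
      field_simp
    rw [hg2def, ← hsq, Real.sqrt_sq harg]
  -- IsLeast
  have hleast : IsLeast {r : ℝ | ∃ q : ℝ × ℝ, q.1 = -c ∧ q.1^2 + q.2^2 < 1 ∧ r = kleinDist (x, y) q}
      (arcoshReal g2) := by
    constructor
    · exact ⟨(-c, y*(1-c^2)/(1+x*c)), rfl, hdisk, hval.symm⟩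
    · rintro r ⟨q, hq1, hq2, rfl⟩
      have hqt : q.2^2 < 1 - c^2 := by rw [hq1] at hq2; nlinarith
      have : kleinDist (x, y) q
          = arcoshReal ((1 + x*c - y*q.2)/Real.sqrt ((1-x^2-y^2)*(1-c^2-q.2^2))) := by
        unfold kleinDist
        rw [hq1]
        ring_nf
      rw [this]
      exact arcosh_mono hg2_ge1 (hbound q.2 hqt)
  rw [hleast.csInf_eq]
  -- simplify LHS
  have hF : kleinDist (x, y) (c, 0) = arcoshReal ((1 - x*c)/Real.sqrt ((1-x^2-y^2)*(1-c^2))) := by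
    unfold kleinDist
    ring_nf
  rw [hF]
  have hsqrtDb : 0 < Real.sqrt ((1-x^2-y^2)*(1-c^2)) := Real.sqrt_pos.mpr (by positivity)
  have hg1_ge1 : 1 ≤ (1 - x*c)/Real.sqrt ((1-x^2-y^2)*(1-c^2)) := by
    rw [le_div_iff₀ hsqrtDb]
    have h1 : Real.sqrt ((1-x^2-y^2)*(1-c^2)) ≤ Real.sqrt ((1-x*c)^2) :=
      Real.sqrt_le_sqrt (by nlinarith [sq_nonneg (x-c), mul_nonneg hb.le (sq_nonneg y)])
    rw [Real.sqrt_sq ha'.le] at h1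
    linarith
  constructor
  · intro h
    have heq := arcosh_inj hg1_ge1 hg2_ge1 h
    have hsqeq : ((1 - x*c)/Real.sqrt ((1-x^2-y^2)*(1-c^2)))^2 = g2^2 := by rw [heq]
    rw [hg2sq, div_pow, Real.sq_sqrt (by positivity)] at hsqeq
    have hKeq : (1 - x*c)^2 = K := by
      have hA : ((1-x^2-y^2)*(1-c^2)) ≠ 0 := by positivity
      field_simp [hA] at hsqeq
      linarith
    field_simp
    nlinarith [hKeq]
  · intro h
    have hy2 : (1-c^2)*y^2 = 4*(x*c) := by
      field_simp at h
      nlinarith [h]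
    have hKeq : K = (1 - x*c)^2 := by rw [hKdef]; nlinarith
    congr 1
    rw [hg2def, hKeq, Real.sqrt_div (sq_nonneg _), Real.sqrt_sq ha'.le]
end
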